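/- Suppose φ₀ : ℝ → ℝ is twice continuously differentiable, positive, even, with φ₀ and φ₀' in L²(ℝ), and satisfies −φ₀'' + V·φ₀ = −μ₀²·φ₀ on ℝ for some μ₀ > 0. Then there exists a constant C > 0 such that |φ₀(x)| ≤ C·exp(−(√2/2)·μ₀·|x|), |φ₀'(x)| ≤ C·exp(−(√2/2)·μ₀·|x|), and |φ₀''(x)| ≤ C·exp(−(√2/2)·μ₀·|x|) for all x ∈ ℝ. -/

import Mathlib

/-!
Put `ν = μ₀ / √2`. Since `V → 0` at `+∞`, on some half-line `[R, ∞)` the equation gives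
`ν² φ₀ ≤ φ₀'' ≤ 3 ν² φ₀`. A positive square-integrable function with `φ'' ≥ 0` there must be
decreasing. Comparing with `e^{±νx}`: both `e^{-νx} (φ' + νφ)` and `e^{νx} (φ' - νφ)` are
nondecreasing; the first forces `φ' + νφ ≤ 0` because `φ' + νφ` stays bounded, hence `e^{νx} φ` is
decreasing, and the second then bounds `|φ'|`. The equation carries the bound over to `φ₀''`,
parity of `φ₀, φ₀', φ₀''` handles `-∞`, and compactness the middle.
-/

open Real MeasureTheory Filter

noncomputable def Qs (x : ℝ) : ℝ := (3/2) * (1 / Real.cosh (x/2))^2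
noncomputable def Hs (x : ℝ) : ℝ := Real.tanh (x/2)
noncomputable def alphaFn (x : ℝ) : ℝ := (1/3) * (Real.sinh x + x)
noncomputable def alphaInv : ℝ → ℝ := Function.invFun alphaFn
noncomputable def Qt (x : ℝ) : ℝ := Qs (alphaInv x)
noncomputable def Ht (x : ℝ) : ℝ := Hs (alphaInv x)
noncomputable def Vpot (x : ℝ) : ℝ := 2 * (Qt x)^2 * (1 - Qt x)

open Set Topology

lemma alphaFn_strictMono : StrictMono alphaFn :=
  (sinh_strictMono.add strictMono_id).const_mul (by norm_num)

lemma continuous_alphaFn : Continuous alphaFn := by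
  unfold alphaFn; fun_prop

lemma alphaFn_neg (x : ℝ) : alphaFn (-x) = -alphaFn x := by
  simp only [alphaFn, sinh_neg]; ring

lemma tendsto_alphaFn_atTop : Tendsto alphaFn atTop atTop := by
  refine tendsto_atTop_mono' atTop ?_ (tendsto_id.atTop_div_const (by norm_num : (0:ℝ) < 3))
  filter_upwards [eventually_ge_atTop 0] with x hx
  have := sinh_nonneg_iff.2 hx
  simp only [alphaFn, id]; linarith

lemma alphaFn_surjective : Function.Surjective alphaFn := by
  intro p
  obtain ⟨b, hb⟩ := (tendsto_alphaFn_atTop.eventually_ge_atTop |p|).exists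
  refine mem_range_of_exists_le_of_exists_ge continuous_alphaFn ⟨-b, ?_⟩
    ⟨b, (le_abs_self p).trans hb⟩
  rw [alphaFn_neg]; linarith [neg_abs_le p]

lemma alphaFn_alphaInv (x : ℝ) : alphaFn (alphaInv x) = x :=
  Function.rightInverse_invFun alphaFn_surjective x

lemma tendsto_alphaInv_atTop : Tendsto alphaInv atTop atTop :=
  tendsto_atTop_atTop.2 fun b => ⟨alphaFn b, fun x hx =>
    alphaFn_strictMono.le_iff_le.1 (by rwa [alphaFn_alphaInv])⟩

lemma tendsto_cosh_atTop : Tendsto cosh atTop atTop := by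
  refine tendsto_atTop_mono (fun x => ?_) (tendsto_exp_atTop.atTop_div_const two_pos)
  rw [cosh_eq]; linarith [exp_pos (-x)]

lemma tendsto_Qs_atTop : Tendsto Qs atTop (𝓝 0) := by
  have h := tendsto_inv_atTop_zero.comp
    (tendsto_cosh_atTop.comp (tendsto_id.atTop_div_const two_pos))
  unfold Qs
  simpa using (h.pow 2).const_mul (3/2)

lemma tendsto_Vpot_atTop : Tendsto Vpot atTop (𝓝 0) := by
  have hQ : Tendsto Qt atTop (𝓝 0) := tendsto_Qs_atTop.comp tendsto_alphaInv_atTop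
  unfold Vpot
  simpa using ((hQ.pow 2).const_mul 2).mul (tendsto_const_nhds.sub hQ)

section Parity

variable {𝕜 F : Type*} [NontriviallyNormedField 𝕜] [NormedAddCommGroup F] [NormedSpace 𝕜 F]
  {f : 𝕜 → F}

lemma Function.Even.deriv (hf : Function.Even f) : Function.Odd (deriv f) := fun x => by
  have h := deriv_comp_neg (f := f) (x := x)
  rw [show (fun y => f (-y)) = f from funext hf] at h
  rw [h, neg_neg]

lemma Function.Odd.deriv (hf : Function.Odd f) : Function.Even (deriv f) := fun x => by
  have h := deriv_comp_neg (f := f) (x := x)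
  rw [show (fun y => f (-y)) = -f from funext hf, deriv.neg] at h
  rw [← neg_inj, ← h]

end Parity

section HalfLine

variable {R : ℝ}

lemma monotoneOn_Ici_of_hasDerivAt_nonneg {f f' : ℝ → ℝ} (hf : ∀ x ≥ R, HasDerivAt f (f' x) x)
    (hf' : ∀ x ≥ R, 0 ≤ f' x) : MonotoneOn f (Ici R) := by
  refine monotoneOn_of_hasDerivWithinAt_nonneg (f' := f') (convex_Ici R)
    (fun x hx => (hf x hx).continuousAt.continuousWithinAt) (fun x hx => ?_) (fun x hx => ?_)
  · rw [interior_Ici] at hx ⊢; exact (hf x (le_of_lt hx)).hasDerivWithinAt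
  · rw [interior_Ici] at hx; exact hf' x (le_of_lt hx)

lemma antitoneOn_Ici_of_hasDerivAt_nonpos {f f' : ℝ → ℝ} (hf : ∀ x ≥ R, HasDerivAt f (f' x) x)
    (hf' : ∀ x ≥ R, f' x ≤ 0) : AntitoneOn f (Ici R) := fun _ ha _ hb hab =>
  neg_le_neg_iff.1 <| monotoneOn_Ici_of_hasDerivAt_nonneg (fun x hx => (hf x hx).neg)
    (fun x hx => neg_nonneg.2 (hf' x hx)) ha hb hab

lemma hasDerivAt_exp_mul_mul {f : ℝ → ℝ} {f' x : ℝ} (c : ℝ) (hf : HasDerivAt f f' x) :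
    HasDerivAt (fun y => exp (c * y) * f y) (exp (c * x) * (f' + c * f x)) x := by
  have hexp : HasDerivAt (fun y => exp (c * y)) (exp (c * x) * c) x := by
    simpa using ((hasDerivAt_id x).const_mul c).exp
  exact (hexp.mul hf).congr_deriv (by ring)

lemma not_integrableOn_Ici_of_le {f : ℝ → ℝ} {a c : ℝ} (hc : 0 < c) (h : ∀ x ≥ a, c ≤ f x) :
    ¬ IntegrableOn f (Ici a) := fun hf => by
  have hconst : IntegrableOn (fun _ => c) (Ici a) := by
    refine hf.mono' aestronglyMeasurable_const ((ae_restrict_iff' measurableSet_Ici).2 ?_)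
    filter_upwards with x hx
    rw [Real.norm_eq_abs, abs_of_pos hc]
    exact h x hx
  simp [integrableOn_const_iff, hc.ne'] at hconst

variable {u u' u'' : ℝ → ℝ} {κ : ℝ}

lemma deriv_nonpos_of_sq_integrableOn (hu : ∀ x ≥ R, HasDerivAt u (u' x) x)
    (hu' : ∀ x ≥ R, HasDerivAt u' (u'' x) x) (hpos : ∀ x ≥ R, 0 < u x)
    (hconvex : ∀ x ≥ R, 0 ≤ u'' x) (hL2 : IntegrableOn (fun x => u x ^ 2) (Ici R)) :
    ∀ x ≥ R, u' x ≤ 0 := by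
  by_contra! ⟨x₀, hx₀, hslope⟩
  have hderiv_mono := monotoneOn_Ici_of_hasDerivAt_nonneg hu' hconvex
  have hmono : MonotoneOn u (Ici x₀) := monotoneOn_Ici_of_hasDerivAt_nonneg
    (fun x hx => hu x (hx₀.trans hx))
    (fun x hx => hslope.le.trans (hderiv_mono hx₀ (hx₀.trans hx) hx))
  refine not_integrableOn_Ici_of_le (pow_pos (hpos x₀ hx₀) 2) (fun x hx => ?_)
    (hL2.mono_set (Ici_subset_Ici.2 hx₀))
  exact pow_le_pow_left₀ (hpos x₀ hx₀).le (hmono self_mem_Ici hx hx) 2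

lemma deriv_add_mul_nonpos (hκ : 0 < κ) (hu : ∀ x ≥ R, HasDerivAt u (u' x) x)
    (hu' : ∀ x ≥ R, HasDerivAt u' (u'' x) x) (hsub : ∀ x ≥ R, κ ^ 2 * u x ≤ u'' x)
    (hderiv : ∀ x ≥ R, u' x ≤ 0) : ∀ x ≥ R, u' x + κ * u x ≤ 0 := by
  by_contra! ⟨x₀, hx₀, hpos₀⟩
  have hmono := monotoneOn_Ici_of_hasDerivAt_nonneg
    (fun x hx => hasDerivAt_exp_mul_mul (-κ) (f := fun y => u' y + κ * u y)
      ((hu' x hx).add ((hu x hx).const_mul κ)))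
    (fun x hx => mul_nonneg (exp_pos _).le (by nlinarith [hsub x hx]))
  have hbdd : ∀ x ≥ R, u' x + κ * u x ≤ κ * u R := fun x hx => by
    nlinarith [hderiv x hx, antitoneOn_Ici_of_hasDerivAt_nonpos hu hderiv self_mem_Ici hx hx]
  have hsmall : Tendsto (fun x => κ * u R * exp (-κ * x)) atTop (𝓝 0) := by
    simpa using (tendsto_exp_neg_atTop_nhds_zero.comp (tendsto_id.const_mul_atTop hκ)).const_mul
      (κ * u R)
  obtain ⟨x, hx, hxx₀⟩ := ((hsmall.eventually
    (gt_mem_nhds (mul_pos (exp_pos (-κ * x₀)) hpos₀))).and (eventually_ge_atTop x₀)).exists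
  have hgrow : exp (-κ * x₀) * (u' x₀ + κ * u x₀) ≤ exp (-κ * x) * (u' x + κ * u x) :=
    hmono hx₀ (hx₀.trans hxx₀) hxx₀
  have hcap := mul_le_mul_of_nonneg_left (hbdd x (hx₀.trans hxx₀)) (exp_pos (-κ * x)).le
  linarith

lemma le_mul_exp_neg_of_deriv_add_mul_nonpos (hu : ∀ x ≥ R, HasDerivAt u (u' x) x)
    (h : ∀ x ≥ R, u' x + κ * u x ≤ 0) : ∀ x ≥ R, u x ≤ exp (κ * R) * u R * exp (-κ * x) := by
  intro x hx
  have hanti := antitoneOn_Ici_of_hasDerivAt_nonpos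
    (fun y hy => hasDerivAt_exp_mul_mul κ (hu y hy))
    (fun y hy => mul_nonpos_of_nonneg_of_nonpos (exp_pos _).le (h y hy))
  calc u x = exp (κ * x) * u x * exp (-κ * x) := by
        rw [mul_right_comm, ← exp_add, neg_mul, add_neg_cancel, exp_zero, one_mul]
    _ ≤ exp (κ * R) * u R * exp (-κ * x) :=
        mul_le_mul_of_nonneg_right (hanti self_mem_Ici hx hx) (exp_pos _).le

lemma abs_deriv_le_mul_exp_neg (hκ : 0 ≤ κ) (hu : ∀ x ≥ R, HasDerivAt u (u' x) x)
    (hu' : ∀ x ≥ R, HasDerivAt u' (u'' x) x) (hnonneg : ∀ x ≥ R, 0 ≤ u x)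
    (hsub : ∀ x ≥ R, κ ^ 2 * u x ≤ u'' x) (hderiv : ∀ x ≥ R, u' x ≤ 0) :
    ∀ x ≥ R, |u' x| ≤ exp (κ * R) * (κ * u R - u' R) * exp (-κ * x) := by
  intro x hx
  have hmono := monotoneOn_Ici_of_hasDerivAt_nonneg
    (fun y hy => hasDerivAt_exp_mul_mul κ (f := fun y => u' y - κ * u y)
      ((hu' y hy).sub ((hu y hy).const_mul κ)))
    (fun y hy => mul_nonneg (exp_pos _).le (by nlinarith [hsub y hy]))
  have h : exp (κ * R) * (u' R - κ * u R) * exp (-κ * x) ≤ u' x - κ * u x := by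
    calc _ ≤ exp (κ * x) * (u' x - κ * u x) * exp (-κ * x) :=
          mul_le_mul_of_nonneg_right (hmono self_mem_Ici hx hx) (exp_pos _).le
      _ = u' x - κ * u x := by
          rw [mul_right_comm, ← exp_add, neg_mul, add_neg_cancel, exp_zero, one_mul]
  rw [abs_of_nonpos (hderiv x hx)]
  nlinarith [mul_nonneg hκ (hnonneg x hx)]

lemma exists_decay_of_pos_subsolution (hκ : 0 < κ) (hu : ∀ x ≥ R, HasDerivAt u (u' x) x)
    (hu' : ∀ x ≥ R, HasDerivAt u' (u'' x) x) (hpos : ∀ x ≥ R, 0 < u x)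
    (hsub : ∀ x ≥ R, κ ^ 2 * u x ≤ u'' x) (hL2 : IntegrableOn (fun x => u x ^ 2) (Ici R)) :
    ∃ C, ∀ x ≥ R, u x ≤ C * exp (-κ * x) ∧ |u' x| ≤ C * exp (-κ * x) := by
  have hderiv := deriv_nonpos_of_sq_integrableOn hu hu' hpos
    (fun x hx => (mul_nonneg (sq_nonneg κ) (hpos x hx).le).trans (hsub x hx)) hL2
  refine ⟨max (exp (κ * R) * u R) (exp (κ * R) * (κ * u R - u' R)), fun x hx => ⟨?_, ?_⟩⟩
  · exact (le_mul_exp_neg_of_deriv_add_mul_nonpos hu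
      (deriv_add_mul_nonpos hκ hu hu' hsub hderiv) x hx).trans (by gcongr; exact le_max_left _ _)
  · exact (abs_deriv_le_mul_exp_neg hκ.le hu hu' (fun y hy => (hpos y hy).le) hsub hderiv x
      hx).trans (by gcongr; exact le_max_right _ _)

end HalfLine

lemma eventually_forall_abs_le_mul_exp_neg_abs {f : ℝ → ℝ} {ν R C : ℝ} (hf : Continuous f)
    (hsymm : ∀ x, |f (-x)| = |f x|) (hdecay : ∀ x ≥ R, |f x| ≤ C * exp (-ν * x)) :
    ∀ᶠ C' in atTop, ∀ x, |f x| ≤ C' * exp (-ν * |x|) := by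
  obtain ⟨M, hM⟩ := (isCompact_Icc (a := -R) (b := R)).exists_bound_of_continuousOn hf.continuousOn
  filter_upwards [eventually_ge_atTop C, eventually_ge_atTop (M * exp (|ν| * R))]
    with C' hC hMC x
  rcases le_or_gt R |x| with hx | hx
  · have hfx : |f x| = |f (|x|)| := by
      rcases abs_choice x with h | h <;> rw [h]; exact (hsymm x).symm
    rw [hfx]
    exact (hdecay _ hx).trans (mul_le_mul_of_nonneg_right hC (exp_pos _).le)
  · have hfM : |f x| ≤ M := hM x (abs_le.1 hx.le)
    have hexp : 1 ≤ exp (|ν| * R) * exp (-ν * |x|) := by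
      rw [← exp_add]
      exact one_le_exp (by nlinarith [le_abs_self ν, abs_nonneg x, abs_nonneg ν])
    calc |f x| ≤ M * (exp (|ν| * R) * exp (-ν * |x|)) :=
          hfM.trans (le_mul_of_one_le_right ((abs_nonneg _).trans hfM) hexp)
      _ ≤ C' * exp (-ν * |x|) := by
          rw [← mul_assoc]; exact mul_le_mul_of_nonneg_right hMC (exp_pos _).le

lemma ground_state_decay_atTop (φ₀ : ℝ → ℝ) (μ₀ : ℝ) (hμ : 0 < μ₀)
    (hC2 : ContDiff ℝ 2 φ₀) (hpos : ∀ x, 0 < φ₀ x) (hL2 : Integrable (fun x => φ₀ x ^ 2))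
    (heq : ∀ x, -(deriv (deriv φ₀) x) + Vpot x * φ₀ x = -μ₀ ^ 2 * φ₀ x) :
    ∃ R C, ∀ x ≥ R, |φ₀ x| ≤ C * exp (-(√2 / 2 * μ₀) * x) ∧
      |deriv φ₀ x| ≤ C * exp (-(√2 / 2 * μ₀) * x) ∧
      |deriv (deriv φ₀) x| ≤ C * exp (-(√2 / 2 * μ₀) * x) := by
  set ν := √2 / 2 * μ₀
  have hν : 0 < ν := by positivity
  have hμν : μ₀ ^ 2 = 2 * ν ^ 2 := by
    rw [mul_pow, div_pow, sq_sqrt zero_le_two]; ring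
  obtain ⟨R, hR⟩ := eventually_atTop.1
    (tendsto_Vpot_atTop.eventually (Metric.closedBall_mem_nhds 0 (pow_pos hν 2)))
  simp only [dist_zero_right, norm_eq_abs, abs_le] at hR
  have hφ'' : ∀ x, deriv (deriv φ₀) x = (Vpot x + 2 * ν ^ 2) * φ₀ x := fun x => by
    linear_combination -(heq x) + φ₀ x * hμν
  have hsub : ∀ x ≥ R, ν ^ 2 * φ₀ x ≤ deriv (deriv φ₀) x := fun x hx => by
    rw [hφ'']; exact mul_le_mul_of_nonneg_right (by linarith [hR x hx]) (hpos x).le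
  have hsuper : ∀ x ≥ R, |deriv (deriv φ₀) x| ≤ 3 * ν ^ 2 * φ₀ x := fun x hx => by
    rw [hφ'', abs_of_nonneg (mul_nonneg (by nlinarith [hR x hx]) (hpos x).le)]
    exact mul_le_mul_of_nonneg_right (by linarith [hR x hx]) (hpos x).le
  have hC1 : ContDiff ℝ 1 (deriv φ₀) := (hC2 : ContDiff ℝ (1 + 1) φ₀).deriv'
  obtain ⟨C, hC⟩ := exists_decay_of_pos_subsolution hν
    (fun x _ => ((hC2.differentiable two_ne_zero) x).hasDerivAt)
    (fun x _ => ((hC1.differentiable one_ne_zero) x).hasDerivAt) (fun x _ => hpos x) hsub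
    hL2.integrableOn
  refine ⟨R, max C (3 * ν ^ 2 * C), fun x hx => ⟨?_, ?_, ?_⟩⟩
  · rw [abs_of_pos (hpos x)]
    exact (hC x hx).1.trans (mul_le_mul_of_nonneg_right (le_max_left _ _) (exp_pos _).le)
  · exact (hC x hx).2.trans (mul_le_mul_of_nonneg_right (le_max_left _ _) (exp_pos _).le)
  · calc |deriv (deriv φ₀) x| ≤ 3 * ν ^ 2 * (C * exp (-ν * x)) :=
          (hsuper x hx).trans (by gcongr; exact (hC x hx).1)
      _ ≤ max C (3 * ν ^ 2 * C) * exp (-ν * x) := by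
          rw [← mul_assoc]; exact mul_le_mul_of_nonneg_right (le_max_right _ _) (exp_pos _).le

theorem ground_state_exponential_decay_general (φ₀ : ℝ → ℝ) (μ₀ : ℝ) (hμ : 0 < μ₀)
    (hC2 : ContDiff ℝ 2 φ₀) (hpos : ∀ x : ℝ, 0 < φ₀ x)
    (heven : ∀ x : ℝ, φ₀ (-x) = φ₀ x)
    (hL2 : Integrable (fun x => (φ₀ x)^2))
    (heq : ∀ x : ℝ, -(deriv (deriv φ₀) x) + Vpot x * φ₀ x = -μ₀^2 * φ₀ x) :
    ∃ C > (0:ℝ), ∀ x : ℝ,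
      |φ₀ x| ≤ C * Real.exp (-(Real.sqrt 2 / 2) * μ₀ * |x|) ∧
      |deriv φ₀ x| ≤ C * Real.exp (-(Real.sqrt 2 / 2) * μ₀ * |x|) ∧
      |deriv (deriv φ₀) x| ≤ C * Real.exp (-(Real.sqrt 2 / 2) * μ₀ * |x|) := by
  have hC1 : ContDiff ℝ 1 (deriv φ₀) := (hC2 : ContDiff ℝ (1 + 1) φ₀).deriv'
  have hodd : Function.Odd (deriv φ₀) := Function.Even.deriv heven
  obtain ⟨R, C, hdecay⟩ := ground_state_decay_atTop φ₀ μ₀ hμ hC2 hpos hL2 heq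
  have h₀ := eventually_forall_abs_le_mul_exp_neg_abs hC2.continuous
    (fun x => by rw [heven]) fun x hx => (hdecay x hx).1
  have h₁ := eventually_forall_abs_le_mul_exp_neg_abs hC1.continuous
    (fun x => by rw [hodd x, abs_neg]) fun x hx => (hdecay x hx).2.1
  have h₂ := eventually_forall_abs_le_mul_exp_neg_abs (hC1.continuous_deriv le_rfl)
    (fun x => by rw [hodd.deriv x]) fun x hx => (hdecay x hx).2.2
  obtain ⟨C', hC', h₀, h₁, h₂⟩ := ((eventually_gt_atTop 0).and (h₀.and (h₁.and h₂))).exists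
  refine ⟨C', hC', fun x => ?_⟩
  rw [neg_mul]
  exact ⟨h₀ x, h₁ x, h₂ x⟩

/-- Exponential decay of the ground state `φ₀` and of its first
two derivatives. -/
theorem ground_state_exponential_decay (φ₀ : ℝ → ℝ) (μ₀ : ℝ) (hμ : 0 < μ₀)
    (hC2 : ContDiff ℝ 2 φ₀) (hpos : ∀ x : ℝ, 0 < φ₀ x)
    (heven : ∀ x : ℝ, φ₀ (-x) = φ₀ x)
    (hL2 : Integrable (fun x => (φ₀ x)^2))
    (hL2' : Integrable (fun x => (deriv φ₀ x)^2))
    (heq : ∀ x : ℝ, -(deriv (deriv φ₀) x) + Vpot x * φ₀ x = -μ₀^2 * φ₀ x) :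
    ∃ C > (0:ℝ), ∀ x : ℝ,
      |φ₀ x| ≤ C * Real.exp (-(Real.sqrt 2 / 2) * μ₀ * |x|) ∧
      |deriv φ₀ x| ≤ C * Real.exp (-(Real.sqrt 2 / 2) * μ₀ * |x|) ∧
      |deriv (deriv φ₀) x| ≤ C * Real.exp (-(Real.sqrt 2 / 2) * μ₀ * |x|) :=
  ground_state_exponential_decay_general φ₀ μ₀ hμ hC2 hpos heven hL2 heq
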